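/- arXiv:2511.09230 — 4 statements merged into one kernel-verified Lean document; each statement's English description precedes it below -/
import Mathlib

section
/- Let k ≥ 1. For any two distinct 2-element sets {a,b} and {a′,b′} in C_k with a < b and a′ < b′, one has a ≠ a′ and b ≠ b′ (i.e., distinct members of C_k have distinct minima and distinct maxima). -/
/-- `Ok k` is the family `O_k = {{2j−1, 2j+1} : 1 ≤ j ≤ 2^{k−1}−1}` (empty for `k = 1`). -/
def Ok (k : ℕ) : Finset (Finset ℕ) :=
  (Finset.Icc 1 (2 ^ (k - 1) - 1)).image (fun j => ({2 * j - 1, 2 * j + 1} : Finset ℕ))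

/-- `2·X := {{2a, 2b} : {a,b} ∈ X}`. -/
def twoMul (X : Finset (Finset ℕ)) : Finset (Finset ℕ) :=
  X.image (fun s => s.image (fun a => 2 * a))

/-- `C_1 = ∅` and `C_k = O_k ∪ 2·C_{k−1}` for `k ≥ 2`. -/
def Ck : ℕ → Finset (Finset ℕ)
  | 0 => ∅
  | 1 => ∅
  | (k + 2) => Ok (k + 2) ∪ twoMul (Ck (k + 1))

/-!
Every member of `C_k` is `{2^i (2j-1), 2^i (2j+1)}`, so one endpoint determines the other.
Inductively: members of `O_k` have odd endpoints at distance 2, members of `2·C_{k-1}` have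
even endpoints whose halves form a member of `C_{k-1}`; parity keeps the two parts apart.
-/

def EndpointsDetermine (X : Finset (Finset ℕ)) : Prop :=
  ∀ a b a' b', a < b → a' < b' → ({a, b} : Finset ℕ) ∈ X → ({a', b'} : Finset ℕ) ∈ X →
    (a = a' ∨ b = b') → a = a' ∧ b = b'

lemma odd_and_eq_add_two_of_mem_Ok {k a b : ℕ} (h : ({a, b} : Finset ℕ) ∈ Ok k) (hab : a < b) :
    a % 2 = 1 ∧ b = a + 2 := by
  obtain ⟨j, hj, hjab⟩ := Finset.mem_image.1 h
  have ha : a ∈ ({2 * j - 1, 2 * j + 1} : Finset ℕ) := hjab ▸ by simp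
  have hb : b ∈ ({2 * j - 1, 2 * j + 1} : Finset ℕ) := hjab ▸ by simp
  simp only [Finset.mem_Icc] at hj
  simp only [Finset.mem_insert, Finset.mem_singleton] at ha hb
  omega

lemma exists_halves_mem_of_mem_twoMul {X : Finset (Finset ℕ)} {a b : ℕ}
    (h : ({a, b} : Finset ℕ) ∈ twoMul X) : ∃ x y, a = 2 * x ∧ b = 2 * y ∧ {x, y} ∈ X := by
  obtain ⟨t, ht, hteq⟩ := Finset.mem_image.1 h
  obtain ⟨x, -, rfl⟩ := Finset.mem_image.1 (hteq ▸ by simp : a ∈ t.image (2 * ·))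
  obtain ⟨y, -, rfl⟩ := Finset.mem_image.1 (hteq ▸ by simp : b ∈ t.image (2 * ·))
  have htxy : t = {x, y} :=
    Finset.image_injective (mul_right_injective₀ two_ne_zero) (by simpa using hteq)
  exact ⟨x, y, rfl, rfl, htxy ▸ ht⟩

lemma EndpointsDetermine.Ok_union_twoMul {X : Finset (Finset ℕ)} (hX : EndpointsDetermine X)
    (k : ℕ) : EndpointsDetermine (Ok k ∪ twoMul X) := by
  intro a b a' b' hab hab' h h' hor
  rcases Finset.mem_union.1 h with h | h <;> rcases Finset.mem_union.1 h' with h' | h'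
  · have := odd_and_eq_add_two_of_mem_Ok h hab
    have := odd_and_eq_add_two_of_mem_Ok h' hab'
    omega
  · have := odd_and_eq_add_two_of_mem_Ok h hab
    obtain ⟨x', y', rfl, rfl, -⟩ := exists_halves_mem_of_mem_twoMul h'
    omega
  · obtain ⟨x, y, rfl, rfl, -⟩ := exists_halves_mem_of_mem_twoMul h
    have := odd_and_eq_add_two_of_mem_Ok h' hab'
    omega
  · obtain ⟨x, y, rfl, rfl, hxy⟩ := exists_halves_mem_of_mem_twoMul h
    obtain ⟨x', y', rfl, rfl, hxy'⟩ := exists_halves_mem_of_mem_twoMul h'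
    have := hX x y x' y' (by omega) (by omega) hxy hxy' (by omega)
    omega

lemma endpointsDetermine_Ck : ∀ k, EndpointsDetermine (Ck k)
  | 0 | 1 => by intro _ _ _ _ _ _ h; simp [Ck] at h
  | k + 2 => (endpointsDetermine_Ck (k + 1)).Ok_union_twoMul (k + 2)

theorem stmt_0_general (k : ℕ) (a b a' b' : ℕ) (hab : a < b) (hab' : a' < b')
    (h1 : ({a, b} : Finset ℕ) ∈ Ck k) (h2 : ({a', b'} : Finset ℕ) ∈ Ck k)
    (hne : ({a, b} : Finset ℕ) ≠ ({a', b'} : Finset ℕ)) :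
    a ≠ a' ∧ b ≠ b' := by
  have determine := endpointsDetermine_Ck k a b a' b' hab hab' h1 h2
  constructor
  · intro h
    obtain ⟨rfl, rfl⟩ := determine (Or.inl h)
    exact hne rfl
  · intro h
    obtain ⟨rfl, rfl⟩ := determine (Or.inr h)
    exact hne rfl

/-- Distinct members of `C_k` have distinct minima and distinct maxima. -/
theorem stmt_0 (k : ℕ) (hk : 1 ≤ k) (a b a' b' : ℕ) (hab : a < b) (hab' : a' < b')
    (h1 : ({a, b} : Finset ℕ) ∈ Ck k) (h2 : ({a', b'} : Finset ℕ) ∈ Ck k)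
    (hne : ({a, b} : Finset ℕ) ≠ ({a', b'} : Finset ℕ)) :
    a ≠ a' ∧ b ≠ b' :=
  stmt_0_general k a b a' b' hab hab' h1 h2 hne
end

section
/- For every k ≥ 1, the spans under symmetric difference of B_k and of C_k coincide: ⟨B_k⟩ = ⟨C_k⟩, as families of subsets of {1,…,2^k−1}. -/
open scoped symmDiff

/-- `B_1 = ∅` and `B_k = B_{k−1} ∪ {{j, 2^{k−1}+j} : 1 ≤ j ≤ 2^{k−1}−1}` for `k ≥ 2`. -/
def Bk : ℕ → Finset (Finset ℕ)
  | 0 => ∅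
  | 1 => ∅
  | (k + 2) =>
      Bk (k + 1) ∪
        (Finset.Icc 1 (2 ^ (k + 1) - 1)).image (fun j => ({j, 2 ^ (k + 1) + j} : Finset ℕ))

/-- The span of a family `X` of subsets under symmetric difference: all symmetric
differences `x_1 ∆ ⋯ ∆ x_t` of members of `X` (with `t = 0` giving `∅`). -/
def spanSD (X : Finset (Finset ℕ)) : Set (Finset ℕ) :=
  {y | ∃ l : List (Finset ℕ), (∀ s ∈ l, s ∈ X) ∧ l.foldr (· ∆ ·) ∅ = y}

lemma mem_Bk : ∀ k i j : ℕ, 1 ≤ j → j < 2 ^ i → i < k →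
    ({j, 2 ^ i + j} : Finset ℕ) ∈ Bk k
  | 0, i, j, hj, hji, hik => by omega
  | 1, i, j, hj, hji, hik => by
    have : i = 0 := by omega
    subst this; simp at hji; omega
  | (k+2), i, j, hj, hji, hik => by
    rw [Bk]
    rcases Nat.lt_or_ge i (k+1) with h | h
    · exact Finset.mem_union_left _ (mem_Bk (k+1) i j hj hji h)
    · have hi : i = k + 1 := by omega
      subst hi
      refine Finset.mem_union_right _ (Finset.mem_image.2 ⟨j, ?_, rfl⟩)
      have : 0 < 2 ^ (k+1) := Nat.pow_pos (by norm_num)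
      simp [Finset.mem_Icc]; omega

lemma mem_Ck : ∀ k t a : ℕ, 1 ≤ a → 2 ^ t * (2 * a + 1) ≤ 2 ^ k - 1 →
    ({2 ^ t * (2 * a - 1), 2 ^ t * (2 * a + 1)} : Finset ℕ) ∈ Ck k
  | 0, t, a, ha, hb => by
    have h1 : 1 ≤ 2 ^ t := Nat.one_le_two_pow
    have h4 : 3 ≤ 2 ^ t * (2 * a + 1) := by nlinarith
    simp only [pow_zero] at hb
    omega
  | 1, t, a, ha, hb => by
    have h1 : 3 ≤ 2 * a + 1 := by omega
    have h2 : 1 ≤ 2 ^ t := Nat.one_le_two_pow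
    have h4 : 2 ^ t * (2 * a + 1) ≥ 3 := by nlinarith
    have hb' : 2 ^ t * (2 * a + 1) ≤ 1 := by simpa using hb
    omega
  | (k+2), 0, a, ha, hb => by
    rw [Ck]
    refine Finset.mem_union_left _ ?_
    have h2 : (2:ℕ) ^ (k+2) = 2 * 2 ^ (k+1) := by ring
    have h3 : 1 ≤ 2 ^ (k+1) := Nat.one_le_two_pow
    refine Finset.mem_image.2 ⟨a, ?_, by norm_num⟩
    show a ∈ Finset.Icc 1 (2 ^ (k + 2 - 1) - 1)
    have : k + 2 - 1 = k + 1 := by omega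
    rw [this, Finset.mem_Icc]; omega
  | (k+2), (t+1), a, ha, hb => by
    rw [Ck]
    refine Finset.mem_union_right _ ?_
    have hrec : ({2 ^ t * (2 * a - 1), 2 ^ t * (2 * a + 1)} : Finset ℕ) ∈ Ck (k+1) := by
      apply mem_Ck (k+1) t a ha
      have e1 : (2:ℕ) ^ (t+1) = 2 * 2 ^ t := by ring
      have e2 : (2:ℕ) ^ (k+2) = 2 * 2 ^ (k+1) := by ring
      have h3 : 1 ≤ 2 ^ (k+1) := Nat.one_le_two_pow
      rw [e1] at hb
      have hX : 2 * 2 ^ t * (2 * a + 1) = 2 * (2 ^ t * (2 * a + 1)) := by ring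
      rw [hX] at hb
      omega
    refine Finset.mem_image.2 ⟨_, hrec, ?_⟩
    rw [Finset.image_insert, Finset.image_singleton]
    have e : ∀ x : ℕ, 2 * (2 ^ t * x) = 2 ^ (t+1) * x := by intro x; ring
    rw [e, e]

lemma Bk_mem_elim : ∀ k, ∀ s ∈ Bk k, ∃ i j : ℕ,
    1 ≤ j ∧ j < 2 ^ i ∧ i < k ∧ s = {j, 2 ^ i + j}
  | 0, s, hs => by simp [Bk] at hs
  | 1, s, hs => by simp [Bk] at hs
  | (k+2), s, hs => by
    rw [Bk] at hs
    rcases Finset.mem_union.1 hs with h | h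
    · obtain ⟨i, j, h1, h2, h3, h4⟩ := Bk_mem_elim (k+1) s h
      exact ⟨i, j, h1, h2, by omega, h4⟩
    · obtain ⟨j, hj, rfl⟩ := Finset.mem_image.1 h
      rw [Finset.mem_Icc] at hj
      have : 0 < 2 ^ (k+1) := Nat.pow_pos (by norm_num)
      exact ⟨k+1, j, hj.1, by omega, by omega, rfl⟩

lemma Ck_mem_elim : ∀ k, ∀ s ∈ Ck k, ∃ t a : ℕ,
    1 ≤ a ∧ 2 ^ t * (2 * a + 1) ≤ 2 ^ k - 1 ∧ s = {2 ^ t * (2 * a - 1), 2 ^ t * (2 * a + 1)}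
  | 0, s, hs => by simp [Ck] at hs
  | 1, s, hs => by simp [Ck] at hs
  | (k+2), s, hs => by
    rw [Ck] at hs
    rcases Finset.mem_union.1 hs with h | h
    · obtain ⟨j, hj, rfl⟩ := Finset.mem_image.1 h
      have hk2 : k + 2 - 1 = k + 1 := by omega
      rw [hk2, Finset.mem_Icc] at hj
      have h3 : 1 ≤ 2 ^ (k+1) := Nat.one_le_two_pow
      have e2 : (2:ℕ) ^ (k+2) = 2 * 2 ^ (k+1) := by ring
      exact ⟨0, j, hj.1, by simp; omega, by norm_num⟩
    · obtain ⟨s', hs', rfl⟩ := Finset.mem_image.1 h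
      obtain ⟨t, a, h1, h2, rfl⟩ := Ck_mem_elim (k+1) s' hs'
      refine ⟨t+1, a, h1, ?_, ?_⟩
      · have e1 : (2:ℕ) ^ (t+1) = 2 * 2 ^ t := by ring
        have e2 : (2:ℕ) ^ (k+2) = 2 * 2 ^ (k+1) := by ring
        have h3 : 1 ≤ 2 ^ (k+1) := Nat.one_le_two_pow
        have hX : 2 ^ (t+1) * (2 * a + 1) = 2 * (2 ^ t * (2 * a + 1)) := by rw [e1]; ring
        rw [hX]
        omega
      · rw [Finset.image_insert, Finset.image_singleton]
        have e : ∀ x : ℕ, 2 * (2 ^ t * x) = 2 ^ (t+1) * x := by intro x; ring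
        rw [e, e]


lemma foldr_symmDiff (l : List (Finset ℕ)) (c : Finset ℕ) :
    l.foldr (· ∆ ·) c = (l.foldr (· ∆ ·) ∅) ∆ c := by
  induction l with
  | nil => simp [← Finset.bot_eq_empty, bot_symmDiff]
  | cons s l ih => simp only [List.foldr, ih, symmDiff_assoc]

lemma mem_spanSD_of_mem {X : Finset (Finset ℕ)} {s : Finset ℕ} (h : s ∈ X) : s ∈ spanSD X :=
  ⟨[s], by simpa using h, by simp [← Finset.bot_eq_empty, symmDiff_bot]⟩

lemma empty_mem_spanSD (X : Finset (Finset ℕ)) : (∅ : Finset ℕ) ∈ spanSD X :=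
  ⟨[], by simp, rfl⟩

lemma symmDiff_mem_spanSD {X : Finset (Finset ℕ)} {a b : Finset ℕ}
    (ha : a ∈ spanSD X) (hb : b ∈ spanSD X) : a ∆ b ∈ spanSD X := by
  obtain ⟨l1, h1, rfl⟩ := ha
  obtain ⟨l2, h2, rfl⟩ := hb
  refine ⟨l1 ++ l2, ?_, ?_⟩
  · intro s hs; rcases List.mem_append.1 hs with h | h
    · exact h1 s h
    · exact h2 s h
  · rw [List.foldr_append, foldr_symmDiff]

lemma spanSD_mono {X Y : Finset (Finset ℕ)} (h : ∀ s ∈ X, (s : Finset ℕ) ∈ spanSD Y) :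
    spanSD X ⊆ spanSD Y := by
  rintro y ⟨l, hl, rfl⟩
  induction l with
  | nil => exact empty_mem_spanSD Y
  | cons s l ih =>
    exact symmDiff_mem_spanSD (h s (hl s (by simp)))
      (ih (fun t ht => hl t (by simp [ht])))

lemma pair_symmDiff_pair {a b c : ℕ} (hab : a ≠ b) (hbc : b ≠ c) (hac : a ≠ c) :
    ({a, b} : Finset ℕ) ∆ {b, c} = {a, c} := by
  ext x; simp [Finset.mem_symmDiff]; omega


lemma mymul_lt_left {p a b : ℕ} (hp : 1 ≤ p) (h : a < b) : p * a < p * b := by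
  nlinarith

lemma base_pair (k : ℕ) : ∀ m : ℕ, Odd m → m ≠ 1 → ∀ t : ℕ, 2 ^ t * m ≤ 2 ^ k - 1 →
    ({2 ^ t, 2 ^ t * m} : Finset ℕ) ∈ spanSD (Bk k) := by
  intro m
  induction m using Nat.strong_induction_on with
  | _ m ih =>
    intro hm hm1 t hb
    have hpt : 1 ≤ 2 ^ t := Nat.one_le_two_pow
    have hm3 : 3 ≤ m := by obtain ⟨r, hr⟩ := hm; omega
    set x := 2 ^ t * m with hx
    have hx3 : 3 * 2 ^ t ≤ x := by rw [hx]; nlinarith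
    have hx0 : x ≠ 0 := by positivity
    set i := Nat.log 2 x with hi
    have hle : 2 ^ i ≤ x := Nat.pow_log_le_self 2 hx0
    have hlt : x < 2 ^ (i + 1) := Nat.lt_pow_succ_log_self (by norm_num) x
    have hti : t < i := by
      by_contra hcon
      push_neg at hcon
      have h1 : 2 ^ (i + 1) ≤ 2 ^ (t + 1) := Nat.pow_le_pow_right (by norm_num) (by omega)
      have h2t : (2:ℕ) ^ (t + 1) = 2 * 2 ^ t := by ring
      omega
    have hik : i < k := by
      by_contra hcon
      push_neg at hcon
      have h1 : 2 ^ k ≤ 2 ^ i := Nat.pow_le_pow_right (by norm_num) hcon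
      have h2 : 1 ≤ 2 ^ k := Nat.one_le_two_pow
      omega
    have hit : 2 ^ i = 2 ^ t * 2 ^ (i - t) := by
      rw [← pow_add]; congr 1; omega
    have hmge : 2 ^ (i - t) ≤ m := by
      rw [hit, hx] at hle
      exact Nat.le_of_mul_le_mul_left hle (by positivity)
    set m' := m - 2 ^ (i - t) with hm'
    have hm'odd : Odd m' := by
      have h2d : 2 ∣ 2 ^ (i - t) := dvd_pow_self 2 (by omega)
      obtain ⟨r, hr⟩ := hm
      obtain ⟨q, hq⟩ := h2d
      exact ⟨r - q, by omega⟩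
    have hm'pos : 1 ≤ m' := by obtain ⟨r, hr⟩ := hm'odd; omega
    have h1it : 1 ≤ 2 ^ (i - t) := Nat.one_le_two_pow
    have hm'lt : m' < m := by omega
    have hx'eq : 2 ^ t * m' + 2 ^ i = x := by
      rw [hit, ← Nat.mul_add, Nat.sub_add_cancel hmge]
    set x' := 2 ^ t * m' with hx'
    have hx'lt : x' < 2 ^ i := by
      have h2i : (2:ℕ) ^ (i + 1) = 2 * 2 ^ i := by ring
      omega
    have hx'pos : 1 ≤ x' := by rw [hx']; nlinarith
    have hpair0 : ({x', 2 ^ i + x'} : Finset ℕ) ∈ Bk k := mem_Bk k i x' hx'pos hx'lt hik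
    have hix : 2 ^ i + x' = x := by omega
    rw [hix] at hpair0
    by_cases hc : m' = 1
    · have : x' = 2 ^ t := by rw [hx', hc, mul_one]
      rw [this] at hpair0
      exact mem_spanSD_of_mem hpair0
    · have hm'3 : 3 ≤ m' := by obtain ⟨r, hr⟩ := hm'odd; omega
      have hne1 : 2 ^ t ≠ x' := by rw [hx']; nlinarith
      have hne2 : x' ≠ x := by
        have : 1 ≤ 2 ^ i := Nat.one_le_two_pow
        omega
      have hne3 : 2 ^ t ≠ x := by omega
      have h1 : ({2 ^ t, x'} : Finset ℕ) ∈ spanSD (Bk k) :=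
        ih m' hm'lt hm'odd hc t (by omega)
      rw [← pair_symmDiff_pair hne1 hne2 hne3]
      exact symmDiff_mem_spanSD h1 (mem_spanSD_of_mem hpair0)

lemma chainC (k t : ℕ) : ∀ c a' : ℕ, 1 ≤ c → 2 ^ t * (2 * a' + 1 + 2 * c) ≤ 2 ^ k - 1 →
    ({2 ^ t * (2 * a' + 1), 2 ^ t * (2 * a' + 1 + 2 * c)} : Finset ℕ) ∈ spanSD (Ck k) := by
  intro c
  induction c with
  | zero => intro a' hc; omega
  | succ c ihc =>
    intro a' hc hb
    have hpt : 1 ≤ 2 ^ t := Nat.one_le_two_pow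
    by_cases h0 : c = 0
    · subst h0
      have e2 : 2 * (a' + 1) + 1 = 2 * a' + 1 + 2 * 1 := by omega
      have hb' : 2 ^ t * (2 * (a' + 1) + 1) ≤ 2 ^ k - 1 := by rw [e2]; exact hb
      have hmem := mem_Ck k t (a' + 1) (by omega) hb'
      rw [show 2 * (a' + 1) - 1 = 2 * a' + 1 from by omega, e2] at hmem
      exact mem_spanSD_of_mem hmem
    · have hble : 2 ^ t * (2 * a' + 1 + 2 * c) ≤ 2 ^ t * (2 * a' + 1 + 2 * (c + 1)) :=
        Nat.mul_le_mul_left _ (by omega)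
      have h1 : ({2 ^ t * (2 * a' + 1), 2 ^ t * (2 * a' + 1 + 2 * c)} : Finset ℕ)
          ∈ spanSD (Ck k) := ihc a' (by omega) (by omega)
      have e2 : 2 * (a' + c + 1) + 1 = 2 * a' + 1 + 2 * (c + 1) := by omega
      have hb' : 2 ^ t * (2 * (a' + c + 1) + 1) ≤ 2 ^ k - 1 := by rw [e2]; exact hb
      have hmem := mem_Ck k t (a' + c + 1) (by omega) hb'
      rw [show 2 * (a' + c + 1) - 1 = 2 * a' + 1 + 2 * c from by omega, e2] at hmem
      have hlt1 : 2 ^ t * (2 * a' + 1) < 2 ^ t * (2 * a' + 1 + 2 * c) :=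
        mymul_lt_left hpt (by omega)
      have hlt2 : 2 ^ t * (2 * a' + 1 + 2 * c) < 2 ^ t * (2 * a' + 1 + 2 * (c + 1)) :=
        mymul_lt_left hpt (by omega)
      rw [← pair_symmDiff_pair
        (show 2 ^ t * (2 * a' + 1) ≠ 2 ^ t * (2 * a' + 1 + 2 * c) by omega)
        (show 2 ^ t * (2 * a' + 1 + 2 * c) ≠ 2 ^ t * (2 * a' + 1 + 2 * (c + 1)) by omega)
        (show 2 ^ t * (2 * a' + 1) ≠ 2 ^ t * (2 * a' + 1 + 2 * (c + 1)) by omega)]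
      exact symmDiff_mem_spanSD h1 (mem_spanSD_of_mem hmem)

/-- For every `k ≥ 1`, `⟨B_k⟩ = ⟨C_k⟩`. -/
theorem stmt_3 (k : ℕ) (hk : 1 ≤ k) : spanSD (Bk k) = spanSD (Ck k) := by
  apply Set.Subset.antisymm
  · apply spanSD_mono
    intro s hs
    obtain ⟨i, j, hj1, hji, hik, rfl⟩ := Bk_mem_elim k s hs
    obtain ⟨t, m, hm2, rfl⟩ := Nat.exists_eq_pow_mul_and_not_dvd
      (show j ≠ 0 by omega) 2 (by norm_num)
    have hpt : 1 ≤ 2 ^ t := Nat.one_le_two_pow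
    have hmodd : Odd m := Nat.odd_iff.2 (Nat.two_dvd_ne_zero.1 hm2)
    obtain ⟨a', ha'⟩ := hmodd
    have hmpos : 1 ≤ m := by omega
    have hti : t < i := by
      by_contra hcon
      push_neg at hcon
      have h1 : 2 ^ i ≤ 2 ^ t := Nat.pow_le_pow_right (by norm_num) hcon
      nlinarith
    have e1 : 2 ^ t * (2 * 2 ^ (i - t - 1)) = 2 ^ i := by
      rw [show 2 * 2 ^ (i - t - 1) = 2 ^ (i - t) from by
        rw [← pow_succ']; congr 1; omega]
      rw [← pow_add]; congr 1; omega
    have key : 2 ^ i + 2 ^ t * m = 2 ^ t * (2 * a' + 1 + 2 * 2 ^ (i - t - 1)) := by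
      rw [Nat.mul_add, e1, ← ha', Nat.add_comm]
    rw [key, ha']
    apply chainC k t (2 ^ (i - t - 1)) a' Nat.one_le_two_pow
    have hb : 2 ^ i + 2 ^ t * m ≤ 2 ^ k - 1 := by
      have h1 : 2 ^ (i + 1) ≤ 2 ^ k := Nat.pow_le_pow_right (by norm_num) (by omega)
      have h2 : (2:ℕ) ^ (i + 1) = 2 * 2 ^ i := by ring
      omega
    rw [← key]; exact hb
  · apply spanSD_mono
    intro s hs
    obtain ⟨t, a, ha1, hb, rfl⟩ := Ck_mem_elim k s hs
    have hpt : 1 ≤ 2 ^ t := Nat.one_le_two_pow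
    by_cases hA : a = 1
    · subst hA
      have h := base_pair k 3 ⟨1, by norm_num⟩ (by norm_num) t
        (by rw [show (3:ℕ) = 2 * 1 + 1 from rfl]; exact hb)
      rw [show 2 * 1 - 1 = 1 from rfl, show 2 * 1 + 1 = 3 from rfl, mul_one]
      exact h
    · have ha2 : 2 ≤ a := by omega
      have hble : 2 ^ t * (2 * a - 1) ≤ 2 ^ t * (2 * a + 1) :=
        Nat.mul_le_mul_left _ (by omega)
      have h1 := base_pair k (2 * a - 1) ⟨a - 1, by omega⟩ (by omega) t (by omega)
      have h2 := base_pair k (2 * a + 1) ⟨a, by omega⟩ (by omega) t hb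
      have hlt1 : 2 ^ t < 2 ^ t * (2 * a - 1) := by
        have h := mymul_lt_left hpt (by omega : 1 < 2 * a - 1)
        simpa using h
      have hlt2 : 2 ^ t * (2 * a - 1) < 2 ^ t * (2 * a + 1) :=
        mymul_lt_left hpt (by omega)
      rw [← pair_symmDiff_pair
        (show 2 ^ t * (2 * a - 1) ≠ 2 ^ t from by omega)
        (show 2 ^ t ≠ 2 ^ t * (2 * a + 1) from by omega)
        (by omega), Finset.pair_comm (2 ^ t * (2 * a - 1)) (2 ^ t)]
      exact symmDiff_mem_spanSD h1 h2
end

section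
/- For every k ≥ 1, the characteristic vectors over ZMod 2 of the 2-element sets in C_k are linearly independent; consequently the span ⟨C_k⟩ under symmetric difference has exactly 2^{2^k − k − 1} elements, and every element of ⟨C_k⟩ is the symmetric difference of a unique subfamily of C_k. -/
open scoped symmDiff

/-- The characteristic vector over `ZMod 2` of a subset of `{1,…,N}`,
indexed by coordinates `{1,…,N}` (coordinate `i` is represented by `i - 1 : Fin N`). -/
def charVec (N : ℕ) (s : Finset ℕ) : Fin N → ZMod 2 :=
  fun i => if (i : ℕ) + 1 ∈ s then 1 else 0

instance : Std.Commutative (α := Finset ℕ) (· ∆ ·) := ⟨symmDiff_comm⟩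
instance : Std.Associative (α := Finset ℕ) (· ∆ ·) := ⟨symmDiff_assoc⟩

/-- The symmetric difference of all members of a finite subfamily `S`. -/
def sdOf (S : Finset (Finset ℕ)) : Finset ℕ :=
  S.fold (· ∆ ·) ∅ id

-- auxiliary lemmas

lemma zmod2_cases (x : ZMod 2) : x = 0 ∨ x = 1 := by fin_cases x; exacts [Or.inl rfl, Or.inr rfl]

lemma pair_max {a b : ℕ} (h : a < b) : ({a, b} : Finset ℕ).max = (b : WithBot ℕ) := by
  rw [show ({a,b}:Finset ℕ) = insert a {b} from rfl, Finset.max_insert, Finset.max_singleton]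
  exact sup_eq_right.mpr (by exact_mod_cast h.le)

lemma mem_Ok {k : ℕ} {s : Finset ℕ} :
    s ∈ Ok (k + 2) ↔ ∃ j, 1 ≤ j ∧ j ≤ 2 ^ (k + 1) - 1 ∧ s = {2 * j - 1, 2 * j + 1} := by
  simp [Ok, Finset.mem_image, Finset.mem_Icc, eq_comm, and_assoc]

lemma mem_twoMul {X : Finset (Finset ℕ)} {s : Finset ℕ} :
    s ∈ twoMul X ↔ ∃ t ∈ X, s = t.image (fun a => 2 * a) := by
  simp [twoMul, Finset.mem_image, eq_comm]

lemma image_pair (a b : ℕ) :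
    ({a, b} : Finset ℕ).image (fun a => 2 * a) = {2 * a, 2 * b} := by
  simp [Finset.image_insert]

lemma ck_shape : ∀ (k : ℕ), ∀ s ∈ Ck k,
    ∃ a b, 1 ≤ a ∧ a < b ∧ b ≤ 2 ^ k - 1 ∧ s = {a, b}
  | 0 => by simp [Ck]
  | 1 => by simp [Ck]
  | (k + 2) => by
    intro s hs
    have h2 : (2:ℕ) ^ (k+2) = 2 ^ (k+1) * 2 := by ring
    have hpow : (1:ℕ) ≤ 2 ^ (k+1) := Nat.one_le_two_pow
    rcases Finset.mem_union.mp hs with h | h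
    · rcases mem_Ok.mp h with ⟨j, hj1, hj2, rfl⟩
      exact ⟨2*j - 1, 2*j + 1, by omega, by omega, by omega, rfl⟩
    · rcases mem_twoMul.mp h with ⟨t, ht, rfl⟩
      rcases ck_shape (k+1) t ht with ⟨a, b, ha, hab, hb, rfl⟩
      exact ⟨2*a, 2*b, by omega, by omega, by omega, image_pair a b⟩

lemma ck_max_inj : ∀ (k : ℕ), ∀ s ∈ Ck k, ∀ t ∈ Ck k, s.max = t.max → s = t
  | 0 => by simp [Ck]
  | 1 => by simp [Ck]
  | (k + 2) => by
    intro s hs t ht hmax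
    rcases Finset.mem_union.mp hs with h | h <;> rcases Finset.mem_union.mp ht with h' | h'
    · rcases mem_Ok.mp h with ⟨j, hj1, hj2, rfl⟩
      rcases mem_Ok.mp h' with ⟨j', hj1', hj2', rfl⟩
      rw [pair_max (by omega), pair_max (by omega)] at hmax
      have : 2*j+1 = 2*j'+1 := by exact_mod_cast hmax
      have : j = j' := by omega
      subst this; rfl
    · rcases mem_Ok.mp h with ⟨j, hj1, hj2, rfl⟩
      rcases mem_twoMul.mp h' with ⟨t₀, ht₀, rfl⟩
      rcases ck_shape (k+1) t₀ ht₀ with ⟨a, b, ha, hab, hb, rfl⟩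
      rw [image_pair] at hmax
      rw [pair_max (by omega), pair_max (by omega)] at hmax
      have : 2*j+1 = 2*b := by exact_mod_cast hmax
      omega
    · rcases mem_Ok.mp h' with ⟨j, hj1, hj2, rfl⟩
      rcases mem_twoMul.mp h with ⟨t₀, ht₀, rfl⟩
      rcases ck_shape (k+1) t₀ ht₀ with ⟨a, b, ha, hab, hb, rfl⟩
      rw [image_pair] at hmax
      rw [pair_max (by omega), pair_max (by omega)] at hmax
      have : 2*b = 2*j+1 := by exact_mod_cast hmax
      omega
    · rcases mem_twoMul.mp h with ⟨s₀, hs₀, rfl⟩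
      rcases mem_twoMul.mp h' with ⟨t₀, ht₀, rfl⟩
      rcases ck_shape (k+1) s₀ hs₀ with ⟨a, b, ha, hab, hb, hs0⟩
      rcases ck_shape (k+1) t₀ ht₀ with ⟨a', b', ha', hab', hb', ht0⟩
      rw [hs0, ht0, image_pair, image_pair, pair_max (by omega), pair_max (by omega)] at hmax
      have hbb : 2*b = 2*b' := by exact_mod_cast hmax
      have : s₀ = t₀ := by
        apply ck_max_inj (k+1) s₀ hs₀ t₀ ht₀
        rw [hs0, ht0, pair_max hab, pair_max hab']
        exact_mod_cast (by omega : b = b')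
      rw [this]

lemma ck_mem_bound {k : ℕ} {s : Finset ℕ} (hs : s ∈ Ck k) {i : ℕ} (hi : i ∈ s) :
    1 ≤ i ∧ i ≤ 2 ^ k - 1 := by
  rcases ck_shape k s hs with ⟨a, b, ha, hab, hb, rfl⟩
  rcases Finset.mem_insert.mp hi with rfl | hi
  · omega
  · rw [Finset.mem_singleton] at hi; omega

lemma charVec_empty (N : ℕ) : charVec N ∅ = 0 := by
  funext i; simp [charVec]

lemma charVec_symmDiff (N : ℕ) (s t : Finset ℕ) :
    charVec N (s ∆ t) = charVec N s + charVec N t := by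
  funext i
  simp only [charVec, Finset.mem_symmDiff, Pi.add_apply]
  by_cases h1 : (i : ℕ) + 1 ∈ s <;> by_cases h2 : (i : ℕ) + 1 ∈ t <;> simp [h1, h2] <;> decide

lemma charVec_inj {N : ℕ} {s t : Finset ℕ} (hs : ∀ i ∈ s, 1 ≤ i ∧ i ≤ N)
    (ht : ∀ i ∈ t, 1 ≤ i ∧ i ≤ N) (h : charVec N s = charVec N t) : s = t := by
  ext i
  constructor <;> intro hi
  · obtain ⟨h1, h2⟩ := hs i hi
    have hlt : i - 1 < N := by omega
    have := congrFun h ⟨i - 1, hlt⟩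
    simp only [charVec] at this
    rw [show (i - 1) + 1 = i from by omega] at this
    rw [if_pos hi] at this
    by_contra hc
    rw [if_neg hc] at this
    exact one_ne_zero this
  · obtain ⟨h1, h2⟩ := ht i hi
    have hlt : i - 1 < N := by omega
    have := congrFun h ⟨i - 1, hlt⟩
    simp only [charVec] at this
    rw [show (i - 1) + 1 = i from by omega] at this
    rw [if_pos hi] at this
    by_contra hc
    rw [if_neg hc] at this
    exact one_ne_zero this.symm

lemma sdOf_empty : sdOf ∅ = ∅ := rfl

lemma sdOf_insert {a : Finset ℕ} {S : Finset (Finset ℕ)} (h : a ∉ S) :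
    sdOf (insert a S) = a ∆ sdOf S := by
  simp [sdOf, Finset.fold_insert h]

lemma charVec_sdOf (N : ℕ) (S : Finset (Finset ℕ)) :
    charVec N (sdOf S) = ∑ t ∈ S, charVec N t := by
  induction S using Finset.induction_on with
  | empty => simp [sdOf_empty, charVec_empty]
  | insert _ _ h ih =>
    rw [sdOf_insert h, charVec_symmDiff, ih, Finset.sum_insert h]

lemma mem_sdOf_exists {S : Finset (Finset ℕ)} {i : ℕ} (h : i ∈ sdOf S) :
    ∃ t ∈ S, i ∈ t := by
  induction S using Finset.induction_on with
  | empty => simp [sdOf_empty] at h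
  | insert _ _ ha ih =>
    rw [sdOf_insert ha, Finset.mem_symmDiff] at h
    rcases h with ⟨h1, _⟩ | ⟨h1, _⟩
    · exact ⟨_, Finset.mem_insert_self _ _, h1⟩
    · rcases ih h1 with ⟨t, ht, hit⟩
      exact ⟨t, Finset.mem_insert_of_mem ht, hit⟩

lemma sdOf_bound {k : ℕ} {S : Finset (Finset ℕ)} (hS : S ⊆ Ck k) :
    ∀ i ∈ sdOf S, 1 ≤ i ∧ i ≤ 2 ^ k - 1 := by
  intro i hi
  rcases mem_sdOf_exists hi with ⟨t, ht, hit⟩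
  exact ck_mem_bound (hS ht) hit

lemma sdOf_eq_empty {k : ℕ} {S : Finset (Finset ℕ)} (hS : S ⊆ Ck k)
    (h : sdOf S = ∅) : S = ∅ := by
  by_contra hne
  obtain ⟨s, hsS, hsmax⟩ := Finset.exists_max_image S Finset.max
    (Finset.nonempty_iff_ne_empty.mpr hne)
  rcases ck_shape k s (hS hsS) with ⟨a, b, ha, hab, hb, hseq⟩
  -- b is in exactly one member of S, namely s
  have hfilter : S.filter (fun t => b ∈ t) = {s} := by
    ext t
    simp only [Finset.mem_filter, Finset.mem_singleton]
    constructor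
    · rintro ⟨htS, hbt⟩
      have h1 : (b : WithBot ℕ) ≤ t.max := Finset.le_max hbt
      have h2 : t.max ≤ s.max := hsmax t htS
      rw [hseq, pair_max hab] at h2
      have h3 : t.max = (b : WithBot ℕ) := le_antisymm h2 h1
      exact ck_max_inj k t (hS htS) s (hS hsS) (by rw [hseq, pair_max hab, h3])
    · rintro rfl
      exact ⟨hsS, by rw [hseq]; simp⟩
  have hlt : b - 1 < 2 ^ k - 1 := by omega
  have := congrFun (charVec_sdOf (2 ^ k - 1) S) ⟨b - 1, hlt⟩
  rw [h, charVec_empty] at this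
  simp only [charVec, Pi.zero_apply, Finset.sum_apply] at this
  rw [show (b - 1) + 1 = b from by omega, Finset.sum_boole, hfilter] at this
  simp at this

lemma sdOf_inj {k : ℕ} {S T : Finset (Finset ℕ)} (hS : S ⊆ Ck k) (hT : T ⊆ Ck k)
    (h : sdOf S = sdOf T) : S = T := by
  have key : charVec (2 ^ k - 1) (sdOf (S ∆ T)) = 0 := by
    rw [charVec_sdOf]
    have hd : Disjoint (S \ T) (T \ S) := disjoint_sdiff_sdiff
    rw [symmDiff_def]
    rw [Finset.sup_eq_union, Finset.sum_union hd]
    have e1 := Finset.sum_sdiff (f := charVec (2^k-1)) (Finset.inter_subset_left : S ∩ T ⊆ S)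
    rw [Finset.sdiff_inter_self_left] at e1
    have e2 := Finset.sum_sdiff (f := charVec (2^k-1)) (Finset.inter_subset_right : S ∩ T ⊆ T)
    rw [show T \ (S ∩ T) = T \ S from by rw [Finset.inter_comm]; exact Finset.sdiff_inter_self_left T S] at e2
    have hsum : ∑ t ∈ S, charVec (2^k-1) t = ∑ t ∈ T, charVec (2^k-1) t := by
      rw [← charVec_sdOf, ← charVec_sdOf, h]
    have add_self : ∀ x : Fin (2^k-1) → ZMod 2, x + x = 0 := by
      intro x; funext i
      rcases zmod2_cases (x i) with h' | h' <;> simp [h'] <;> decide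
    have := add_self (∑ t ∈ S, charVec (2^k-1) t)
    -- ∑_{S\T} + ∑_{T\S} = ∑_S + ∑_T - 2∑_∩ = 0
    have : (∑ t ∈ S \ T, charVec (2^k-1) t + ∑ t ∈ T \ S, charVec (2^k-1) t)
        + (∑ t ∈ S ∩ T, charVec (2^k-1) t + ∑ t ∈ S ∩ T, charVec (2^k-1) t)
        = ∑ t ∈ S, charVec (2^k-1) t + ∑ t ∈ T, charVec (2^k-1) t := by
      rw [← e1, ← e2]; abel
    rw [add_self, add_zero] at this
    rw [this, hsum, add_self]
  have hsub : S ∆ T ⊆ Ck k := by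
    intro x hx
    rw [Finset.mem_symmDiff] at hx
    rcases hx with ⟨h1, _⟩ | ⟨h1, _⟩
    · exact hS h1
    · exact hT h1
  have : sdOf (S ∆ T) = ∅ := by
    apply charVec_inj (sdOf_bound hsub) (by simp) (by rw [key, charVec_empty])
  have := sdOf_eq_empty hsub this
  rwa [← Finset.bot_eq_empty, symmDiff_eq_bot] at this

lemma card_Ok (k : ℕ) : (Ok (k + 2)).card = 2 ^ (k + 1) - 1 := by
  rw [Ok]
  rw [Finset.card_image_of_injOn]
  · simp [Nat.card_Icc]
  · intro j hj j' hj' hEq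
    rw [Finset.mem_coe, Finset.mem_Icc] at hj hj'
    have hEq' : ({2 * j - 1, 2 * j + 1} : Finset ℕ) = {2 * j' - 1, 2 * j' + 1} := hEq
    have h1 : 2 * j + 1 ∈ ({2 * j' - 1, 2 * j' + 1} : Finset ℕ) := by
      rw [← hEq']; simp
    have h2 : 2 * j' + 1 ∈ ({2 * j - 1, 2 * j + 1} : Finset ℕ) := by
      rw [hEq']; simp
    simp only [Finset.mem_insert, Finset.mem_singleton] at h1 h2
    omega

lemma card_twoMul (X : Finset (Finset ℕ)) : (twoMul X).card = X.card := by
  rw [twoMul, Finset.card_image_of_injective]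
  exact Finset.image_injective (fun a b h => by omega)

lemma disj_Ok_twoMul (k : ℕ) : Disjoint (Ok (k + 2)) (twoMul (Ck (k + 1))) := by
  rw [Finset.disjoint_left]
  intro s hs hs'
  rcases mem_Ok.mp hs with ⟨j, hj1, hj2, rfl⟩
  rcases mem_twoMul.mp hs' with ⟨t, ht, hEq⟩
  have : 2 * j + 1 ∈ t.image (fun a => 2 * a) := by rw [← hEq]; simp
  rw [Finset.mem_image] at this
  obtain ⟨a, _, ha⟩ := this
  omega

lemma card_Ck : ∀ k : ℕ, (Ck k).card = 2 ^ k - k - 1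
  | 0 => by simp [Ck]
  | 1 => by simp [Ck]
  | (k + 2) => by
    rw [show Ck (k+2) = Ok (k+2) ∪ twoMul (Ck (k+1)) from rfl,
      Finset.card_union_of_disjoint (disj_Ok_twoMul k), card_Ok, card_twoMul, card_Ck (k+1)]
    have h1 : k + 1 < 2 ^ (k + 1) := Nat.lt_two_pow_self
    have h2 : (2:ℕ) ^ (k + 2) = 2 ^ (k+1) * 2 := by ring
    omega

lemma exists_list_sdOf (S : Finset (Finset ℕ)) :
    ∃ l : List (Finset ℕ), (∀ s ∈ l, s ∈ S) ∧ l.foldr (· ∆ ·) ∅ = sdOf S := by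
  induction S using Finset.induction_on with
  | empty => exact ⟨[], by simp, rfl⟩
  | @insert a S ha ih =>
    obtain ⟨l, hl, hleq⟩ := ih
    refine ⟨a :: l, ?_, ?_⟩
    · intro s hs
      rcases List.mem_cons.mp hs with rfl | hs
      · exact Finset.mem_insert_self _ _
      · exact Finset.mem_insert_of_mem (hl s hs)
    · simp [List.foldr_cons, hleq, sdOf_insert ha]

lemma spanSD_eq (X : Finset (Finset ℕ)) :
    spanSD X = (fun S => sdOf S) '' {S : Finset (Finset ℕ) | S ⊆ X} := by
  ext y
  constructor
  · rintro ⟨l, hl, rfl⟩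
    induction l with
    | nil => exact ⟨∅, by simp, rfl⟩
    | cons a l ih =>
      obtain ⟨S, hS, hSeq⟩ := ih (fun s hs => hl s (List.mem_cons_of_mem a hs))
      simp only [Set.mem_setOf_eq] at hS
      simp only [List.foldr_cons]
      by_cases ha : a ∈ S
      · refine ⟨S.erase a, Set.mem_setOf_eq ▸ (Finset.erase_subset a S).trans hS, ?_⟩
        have : S = insert a (S.erase a) := (Finset.insert_erase ha).symm
        have hfold : sdOf S = a ∆ sdOf (S.erase a) := by
          conv_lhs => rw [this]
          exact sdOf_insert (Finset.notMem_erase a S)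
        simp only [← hSeq, hfold, symmDiff_symmDiff_cancel_left]
      · refine ⟨insert a S, ?_, ?_⟩
        · simp only [Set.mem_setOf_eq]
          exact Finset.insert_subset (hl a (List.mem_cons_self)) hS
        · show sdOf (insert a S) = _
          rw [sdOf_insert ha]
          exact congrArg (a ∆ ·) hSeq
  · rintro ⟨S, hS, rfl⟩
    simp only [Set.mem_setOf_eq] at hS
    obtain ⟨l, hl, hleq⟩ := exists_list_sdOf S
    exact ⟨l, fun s hs => hS (hl s hs), hleq⟩

/-- The characteristic vectors of the sets in `C_k` are linearly independent over `ZMod 2`;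
consequently `⟨C_k⟩` has exactly `2^{2^k − k − 1}` elements, and every element of `⟨C_k⟩`
is the symmetric difference of a unique subfamily of `C_k`. -/
theorem stmt_4 (k : ℕ) (hk : 1 ≤ k) :
    LinearIndependent (ZMod 2)
      (fun s : {x // x ∈ Ck k} => charVec (2 ^ k - 1) (s : Finset ℕ)) ∧
    (spanSD (Ck k)).ncard = 2 ^ (2 ^ k - k - 1) ∧
    (∀ y ∈ spanSD (Ck k), ∃! S : Finset (Finset ℕ), S ⊆ Ck k ∧ sdOf S = y) := by
  refine ⟨?_, ?_, ?_⟩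
  · rw [Fintype.linearIndependent_iff]
    intro g hg
    set S : Finset (Finset ℕ) :=
      ((Ck k).attach.filter (fun i => g i = 1)).image Subtype.val with hSdef
    have hSsub : S ⊆ Ck k := by
      intro x hx
      rcases Finset.mem_image.mp hx with ⟨j, _, rfl⟩
      exact j.2
    have hsum : ∑ t ∈ S, charVec (2 ^ k - 1) t = 0 := by
      rw [hSdef, Finset.sum_image (fun x _ y _ h => Subtype.coe_injective h)]
      rw [← hg, Finset.univ_eq_attach,
        ← Finset.sum_filter_add_sum_filter_not (Ck k).attach (fun i => g i = 1)]
      have h2 : ∑ i ∈ (Ck k).attach.filter (fun i => ¬ g i = 1),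
          g i • charVec (2 ^ k - 1) (i : Finset ℕ) = 0 := by
        apply Finset.sum_eq_zero
        intro i hi
        have : g i = 0 := by
          rcases zmod2_cases (g i) with h | h
          · exact h
          · exact absurd h (Finset.mem_filter.mp hi).2
        rw [this, zero_smul]
      rw [h2, add_zero]
      apply Finset.sum_congr rfl
      intro i hi
      rw [(Finset.mem_filter.mp hi).2, one_smul]
    have hempty : S = ∅ := by
      apply sdOf_eq_empty hSsub
      apply charVec_inj (sdOf_bound hSsub) (N := 2 ^ k - 1) (by simp)
      rw [charVec_sdOf, hsum, charVec_empty]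
    intro i
    rcases zmod2_cases (g i) with h | h
    · exact h
    · exfalso
      have : (i : Finset ℕ) ∈ S :=
        Finset.mem_image_of_mem _ (Finset.mem_filter.mpr ⟨Finset.mem_attach _ _, h⟩)
      rw [hempty] at this
      exact absurd this (Finset.notMem_empty _)
  · rw [spanSD_eq]
    have hset : {S : Finset (Finset ℕ) | S ⊆ Ck k} = ↑((Ck k).powerset) := by
      ext S; simp
    rw [hset]
    have hinj : Set.InjOn (fun S => sdOf S) ↑((Ck k).powerset) := fun S hS T hT h =>
      sdOf_inj (Finset.mem_powerset.mp hS) (Finset.mem_powerset.mp hT) h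
    rw [Set.ncard_image_of_injOn hinj, Set.ncard_coe_finset, Finset.card_powerset, card_Ck]
  · intro y hy
    rw [spanSD_eq] at hy
    obtain ⟨S, hS, rfl⟩ := hy
    exact ⟨S, ⟨hS, rfl⟩, fun T ⟨hT, hTeq⟩ => sdOf_inj hT hS hTeq⟩
end

section
/- Let n ≥ 2, let P be any Hamiltonian path in the hypercube Q_n, and consider any (n−1)-run partition of its flip sequence, with parameters ν and λ. Then n·ν ≥ 2^n − 2. -/
open scoped symmDiff

/-- A Hamiltonian path in the hypercube `Q_n` (vertices: subsets of `[n] = {1,…,n}`,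
edges: pairs of subsets whose symmetric difference is a singleton), given as the list
of its `2^n` vertices. -/
def IsHamPath (n : ℕ) (l : List (Finset ℕ)) : Prop :=
  (∀ s ∈ l, s ⊆ Finset.Icc 1 n) ∧ l.Nodup ∧ l.length = 2 ^ n ∧
    l.Chain' (fun s t => ∃ d, s ∆ t = {d})

/-- The flip sequence of a path: the directions of its consecutive edges
(the direction of an edge is the unique element of the symmetric difference of its
endpoints, here obtained as the sum of the elements of that singleton). -/
def flipSeq (l : List (Finset ℕ)) : List ℕ :=
  (l.zip l.tail).map (fun p => (p.1 ∆ p.2).sum id)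

/-- A block of type (a) for a `ρ`-run partition: a nonempty block, all of whose entries
are `≤ ρ`, whose consecutive entries increase by exactly `1` throughout or decrease by
exactly `1` throughout (a single entry `≤ ρ` qualifies). -/
def IsRunBlock (ρ : ℕ) (b : List ℕ) : Prop :=
  b ≠ [] ∧ (∀ a ∈ b, a ≤ ρ) ∧
    (b.Chain' (fun p q => q = p + 1) ∨ b.Chain' (fun p q => p = q + 1))

/-- A `ρ`-run partition of a sequence `σ`: a decomposition of `σ` into contiguous
blocks, each being either a run (type (a)) or a singleton block whose entry
exceeds `ρ` (type (b)). -/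
def IsRunPartition (ρ : ℕ) (σ : List ℕ) (bs : List (List ℕ)) : Prop :=
  bs.flatten = σ ∧ ∀ b ∈ bs, IsRunBlock ρ b ∨ ∃ a, ρ < a ∧ b = [a]

/-- The blocks of type (a) (in a valid `ρ`-run partition these are exactly the blocks
all of whose entries are `≤ ρ`). -/
def runBlocks (ρ : ℕ) (bs : List (List ℕ)) : List (List ℕ) :=
  bs.filter (fun b => b.all (fun a => decide (a ≤ ρ)))

/-- `ν`: the number of blocks of type (a). -/
def runNu (ρ : ℕ) (bs : List (List ℕ)) : ℕ := (runBlocks ρ bs).length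

/-- `λ`: the sum over all blocks of type (a) of (block length − 1). -/
def runLambda (ρ : ℕ) (bs : List (List ℕ)) : ℕ :=
  ((runBlocks ρ bs).map (fun b => b.length - 1)).sum

private lemma chain'_zip_tail {α : Type*} {R : α → α → Prop} :
    ∀ {l : List α}, l.Chain' R → ∀ p ∈ l.zip l.tail, R p.1 p.2
  | [] => fun _ p hp => absurd hp (by simp)
  | [a] => fun _ p hp => absurd hp (by simp)
  | a :: b :: t => fun h p hp => by
    simp only [List.Chain'] at h
    rw [List.isChain_cons_cons] at h
    rcases (by simpa using hp : p = (a, b) ∨ p ∈ (b :: t).zip t) with rfl | hp'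
    · exact h.1
    · exact chain'_zip_tail h.2 p (by simpa using hp')

private lemma flipSeq_cons_cons (a b : Finset ℕ) (t : List (Finset ℕ)) :
    flipSeq (a :: b :: t) = ((a ∆ b).sum id) :: flipSeq (b :: t) := rfl

private lemma flipSeq_chain'_ne :
    ∀ (l : List (Finset ℕ)), l.Nodup → l.Chain' (fun s t => ∃ d, s ∆ t = {d}) →
      (flipSeq l).Chain' (· ≠ ·)
  | [], _, _ => by simp [flipSeq, List.Chain']
  | [a], _, _ => by simp [flipSeq, List.Chain']
  | [a, b], _, _ => by simp [flipSeq, List.Chain']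
  | a :: b :: c :: t, hnd, hch => by
    have IH := flipSeq_chain'_ne (b :: c :: t) hnd.of_cons hch.tail
    rw [flipSeq_cons_cons, flipSeq_cons_cons] at *
    simp only [List.Chain']
    rw [List.isChain_cons_cons]
    refine ⟨?_, IH⟩
    simp only [List.Chain'] at hch
    rw [List.isChain_cons_cons] at hch
    obtain ⟨⟨d1, hd1⟩, hch2⟩ := hch
    rw [List.isChain_cons_cons] at hch2
    obtain ⟨⟨d2, hd2⟩, _⟩ := hch2
    rw [hd1, hd2, Finset.sum_singleton, Finset.sum_singleton, id, id]
    intro hdd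
    subst hdd
    have hac : a = c := by
      have h2 : a ∆ b = b ∆ c := hd1.trans hd2.symm
      calc a = a ∆ b ∆ b := (symmDiff_symmDiff_cancel_right b a).symm
        _ = b ∆ c ∆ b := by rw [h2]
        _ = c := by rw [symmDiff_comm, symmDiff_symmDiff_cancel_left]
    have : a ∉ b :: c :: t := (List.nodup_cons.mp hnd).1
    exact this (hac ▸ List.mem_cons_of_mem _ (List.mem_cons_self (a := a) (l := t)))

private lemma flipSeq_mem_Icc (n : ℕ) (l : List (Finset ℕ))
    (hsub : ∀ s ∈ l, s ⊆ Finset.Icc 1 n)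
    (hch : l.Chain' (fun s t => ∃ d, s ∆ t = {d})) :
    ∀ a ∈ flipSeq l, a ∈ Finset.Icc 1 n := by
  intro a ha
  simp only [flipSeq, List.mem_map] at ha
  obtain ⟨p, hp, rfl⟩ := ha
  obtain ⟨d, hd⟩ := chain'_zip_tail hch p hp
  rw [hd, Finset.sum_singleton, id]
  have h1 : p.1 ∈ l := (List.of_mem_zip hp).1
  have h2 : p.2 ∈ l := List.mem_of_mem_tail (List.of_mem_zip hp).2
  have hdm : d ∈ p.1 ∆ p.2 := hd ▸ Finset.mem_singleton_self d
  rcases Finset.mem_symmDiff.mp hdm with ⟨h, _⟩ | ⟨h, _⟩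
  · exact hsub p.1 h1 h
  · exact hsub p.2 h2 h

private lemma runBlock_length_le (ρ : ℕ) (b : List ℕ) (hb : IsRunBlock ρ b)
    (h1 : ∀ a ∈ b, 1 ≤ a) : b.length ≤ ρ := by
  have hnd : b.Nodup := by
    rcases hb.2.2 with h | h
    · have hlt : b.Chain' (· < ·) := h.imp (fun hpq => by omega)
      exact ((List.isChain_iff_pairwise.mp hlt).imp fun hab => ne_of_lt hab)
    · have hlt : b.Chain' (· > ·) := h.imp (fun hpq => by omega)
      exact ((List.isChain_iff_pairwise.mp hlt).imp fun hab => ne_of_gt hab)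
  have hss : b.toFinset ⊆ Finset.Icc 1 ρ := by
    intro a ha
    rw [List.mem_toFinset] at ha
    exact Finset.mem_Icc.mpr ⟨h1 a ha, hb.2.1 a ha⟩
  calc b.length = b.toFinset.card := (List.toFinset_card_of_nodup hnd).symm
    _ ≤ (Finset.Icc 1 ρ).card := Finset.card_le_card hss
    _ = ρ := by rw [Nat.card_Icc]; omega

private lemma chain'_imp_mem {α : Type*} {R S : α → α → Prop} :
    ∀ {l : List α}, l.Chain' R → (∀ x ∈ l, ∀ y ∈ l, R x y → S x y) → l.Chain' S
  | [], _, _ => List.isChain_nil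
  | [a], _, _ => by simp [List.Chain']
  | a :: b :: t, h, hm => by
    simp only [List.Chain'] at h ⊢
    rw [List.isChain_cons_cons] at h ⊢
    exact ⟨hm a (by simp) b (by simp) h.1,
      chain'_imp_mem h.2 fun x hx y hy hr =>
        hm x (List.mem_cons_of_mem _ hx) y (List.mem_cons_of_mem _ hy) hr⟩

private lemma sum_map_filter_add {α : Type*} (P : α → Bool) (f : α → ℕ) :
    ∀ l : List α,
      ((l.filter P).map f).sum + ((l.filter (fun x => !P x)).map f).sum = (l.map f).sum
  | [] => rfl
  | x :: t => by
    have IH := sum_map_filter_add P f t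
    by_cases h : P x = true <;> simp [List.filter_cons, h] <;> omega

private lemma count_aux {α : Type*} (P : α → Bool) :
    ∀ bs : List α, bs.Chain' (fun x y => P x = true ∨ P y = true) →
      bs.length ≤ 2 * (bs.filter P).length + 1 ∧
      (∀ a t, bs = a :: t → P a = true → bs.length ≤ 2 * (bs.filter P).length)
  | [], _ => ⟨by simp, by intro a t h; simp at h⟩
  | [x], _ => by
    constructor
    · by_cases h : P x = true <;> simp [List.filter_cons, h]
    · intro a t heq hp
      injection heq with e1 e2
      subst e1; subst e2
      simp [List.filter_cons, hp]
  | x :: y :: t, h => by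
    simp only [List.Chain'] at h
    rw [List.isChain_cons_cons] at h
    obtain ⟨h1, h2⟩ := h
    have IH := count_aux P (y :: t) h2
    by_cases hx : P x = true
    · have key := IH.1
      constructor
      · simp only [List.filter_cons, hx, if_true, List.length_cons] at *
        simp [hx]
        omega
      · intro a t' heq hp
        simp only [List.filter_cons, hx, List.length_cons] at *
        simp [hx]
        omega
    · have hy : P y = true := h1.resolve_left hx
      have key := IH.2 y t rfl hy
      constructor
      · simp only [List.filter_cons, List.length_cons] at *
        simp [hx]
        omega
      · intro a t' heq hp
        injection heq with e1 e2
        exact absurd (e1 ▸ hp) hx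

/-- For any Hamiltonian path in `Q_n`, `n ≥ 2`, and any `(n−1)`-run partition of its flip
sequence with parameters `ν` and `λ`, one has `n·ν ≥ 2^n − 2`. -/
theorem stmt_15 (n : ℕ) (hn : 2 ≤ n) (l : List (Finset ℕ)) (hl : IsHamPath n l)
    (bs : List (List ℕ)) (hbs : IsRunPartition (n - 1) (flipSeq l) bs) :
    n * runNu (n - 1) bs ≥ 2 ^ n - 2 := by
  obtain ⟨hsub, hnd, hlen, hch⟩ := hl
  obtain ⟨hflat, hblk⟩ := hbs
  set ρ := n - 1 with hρ
  set P : List ℕ → Bool := fun b => b.all (fun a => decide (a ≤ ρ)) with hP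
  have hPiff : ∀ b : List ℕ, P b = true ↔ ∀ a ∈ b, a ≤ ρ := by
    intro b; simp [hP, List.all_eq_true]
  -- entries of the flip sequence
  have hmem : ∀ a ∈ flipSeq l, a ∈ Finset.Icc 1 n := flipSeq_mem_Icc n l hsub hch
  have hσne : (flipSeq l).Chain' (· ≠ ·) := flipSeq_chain'_ne l hnd hch
  -- membership of entries of blocks
  have hentry : ∀ b ∈ bs, ∀ a ∈ b, a ∈ Finset.Icc 1 n := by
    intro b hb a ha
    exact hmem a (hflat ▸ List.mem_flatten.mpr ⟨b, hb, ha⟩)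
  -- blocks are nonempty
  have hnonnil : ∀ b ∈ bs, b ≠ [] := by
    intro b hb
    rcases hblk b hb with h | ⟨a, _, rfl⟩
    · exact h.1
    · simp
  have hnilnot : [] ∉ bs := fun h => hnonnil [] h rfl
  -- bad blocks are exactly [n]
  have hbad : ∀ b ∈ bs, P b ≠ true → b = [n] := by
    intro b hb hPb
    rcases hblk b hb with h | ⟨a, ha, rfl⟩
    · exact absurd ((hPiff b).mpr h.2.1) hPb
    · have : a ∈ Finset.Icc 1 n := hentry _ hb a (by simp)
      have : a ≤ n := (Finset.mem_Icc.mp this).2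
      have : a = n := by omega
      rw [this]
  -- chain condition on blocks
  have hchainF := ((List.isChain_flatten hnilnot).mp (hflat ▸ hσne)).2
  have hchainP : bs.Chain' (fun x y => P x = true ∨ P y = true) := by
    refine chain'_imp_mem hchainF ?_
    intro x hx y hy hxy
    by_contra hc
    push_neg at hc
    have hxn := hbad x hx hc.1
    have hyn := hbad y hy hc.2
    subst hxn; subst hyn
    exact hxy n (by simp) n (by simp) rfl
  -- counting
  have hcount : bs.length ≤ 2 * (bs.filter P).length + 1 := (count_aux P bs hchainP).1
  set ν := (bs.filter P).length with hν
  have hνeq : runNu ρ bs = ν := rfl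
  -- length of flip sequence
  have hσlen : (flipSeq l).length = 2 ^ n - 1 := by
    simp [flipSeq, hlen]
  -- total sum of block lengths
  have htot : ((bs.filter P).map List.length).sum
      + ((bs.filter (fun x => !P x)).map List.length).sum = 2 ^ n - 1 := by
    rw [sum_map_filter_add, ← List.length_flatten, hflat, hσlen]
  -- good blocks have length ≤ ρ
  have hgood : ((bs.filter P).map List.length).sum ≤ ν * ρ := by
    have hb : ∀ x ∈ (bs.filter P).map List.length, x ≤ ρ := by
      intro x hx
      obtain ⟨b, hb, rfl⟩ := List.mem_map.mp hx
      have hbm : b ∈ bs := List.mem_of_mem_filter hb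
      have hPb : P b = true := List.of_mem_filter hb
      rcases hblk b hbm with h | ⟨a, ha, rfl⟩
      · refine runBlock_length_le ρ b h ?_
        intro a ha
        exact (Finset.mem_Icc.mp (hentry b hbm a ha)).1
      · exact absurd ((hPiff _).mp hPb a (by simp)) (by omega)
    calc ((bs.filter P).map List.length).sum
        ≤ ((bs.filter P).map List.length).length • ρ :=
          List.sum_le_card_nsmul _ _ hb
      _ = ν * ρ := by rw [List.length_map]; simp [hν]
  -- bad blocks have length ≤ 1
  have hbadlen : ((bs.filter (fun x => !P x)).map List.length).sum
      ≤ (bs.filter (fun x => !P x)).length := by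
    have hb : ∀ x ∈ (bs.filter (fun x => !P x)).map List.length, x ≤ 1 := by
      intro x hx
      obtain ⟨b, hb, rfl⟩ := List.mem_map.mp hx
      have hbm : b ∈ bs := List.mem_of_mem_filter hb
      have hPb : ¬ P b = true := by simpa using List.of_mem_filter hb
      rw [hbad b hbm hPb]
      simp
    calc ((bs.filter (fun x => !P x)).map List.length).sum
        ≤ ((bs.filter (fun x => !P x)).map List.length).length • 1 :=
          List.sum_le_card_nsmul _ _ hb
      _ = _ := by rw [List.length_map]; simp
  -- bad count
  have hsplit : bs.length = ν + (bs.filter (fun x => !P x)).length := by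
    rw [hν]; exact List.length_eq_length_filter_add P
  -- put it together
  have hn1 : ν * ρ + ν = n * ν := by
    have : n = ρ + 1 := by omega
    rw [this]
    ring
  have hfin : 2 ^ n - 1 ≤ n * ν + 1 := by omega
  have hgoal : n * runNu ρ bs = n * ν := by rw [hνeq]
  omega
end
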